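/- arXiv:2009.07214 — 6 statements merged into one kernel-verified Lean document; each statement's English description precedes it below -/
import Mathlib

section
/- The residue of the function z ↦ e^{a z}/(e^z + 1)^2 at z = iπ equals -(1 - a) e^{i a π}. -/
/-!
Near `c = iπ` write `e^z + 1 = (z - c) g z` with `g = dslope (e^· + 1) c`, so `g c = e^c = -1` and
`g' c = e^c / 2 = -1/2`. Then `e^{az}/(e^z + 1)^2 = h z / (z - c)^2` with `h = e^{a·}/g^2` holomorphic
near `c`, and the Cauchy formula for the first derivative gives the residue
`h' c = a e^{ac} - 2 e^{ac} g' c / g c = -(1 - a) e^{ac}`.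
-/

open Complex Metric

theorem AnalyticAt.hasDerivAt_dslope {𝕜 : Type*} [NontriviallyNormedField 𝕜] [CompleteSpace 𝕜]
    [CharZero 𝕜] {f : 𝕜 → 𝕜} {c : 𝕜} (hf : AnalyticAt 𝕜 f c) :
    HasDerivAt (dslope f c) (iteratedDeriv 2 f c / 2) c := by
  have := hf.hasFPowerSeriesAt.has_fpower_series_dslope_fslope.hasStrictDerivAt.hasDerivAt
  simpa [FormalMultilinearSeries.coeff_fslope] using this

theorem exists_circleIntegral_div_sq_of_simple_zero {F ψ : ℂ → ℂ} {c : ℂ}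
    (hF : Differentiable ℂ F) (hψ : Differentiable ℂ ψ) (hFc : F c = 0) (hF' : deriv F c ≠ 0) :
    ∃ ε > 0, ∀ r : ℝ, 0 < r → r < ε →
      ∮ z in C(c, r), ψ z / F z ^ 2 =
        2 * Real.pi * I * deriv (fun z => ψ z / dslope F c z ^ 2) c := by
  have hg : Differentiable ℂ (dslope F c) :=
    differentiableOn_univ.1 ((differentiableOn_dslope Filter.univ_mem).2 hF.differentiableOn)
  obtain ⟨ε, hε, hgne⟩ := Metric.eventually_nhds_iff.1 <|
    (hg c).continuousAt.eventually_ne (show dslope F c c ≠ 0 by rwa [dslope_same])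
  refine ⟨ε, hε, fun r hr hrε => ?_⟩
  have hdiff : DifferentiableOn ℂ (fun z => ψ z / dslope F c z ^ 2) (closedBall c r) :=
    fun z hz => ((hψ z).div ((hg z).pow 2)
      (pow_ne_zero 2 (hgne (lt_of_le_of_lt hz hrε)))).differentiableWithinAt
  rw [← smul_eq_mul, ← hdiff.deriv_eq_smul_circleIntegral hr]
  refine circleIntegral.integral_congr hr.le fun z hz => ?_
  have hzc : z - c ≠ 0 := sub_ne_zero.2 (ne_of_mem_sphere hz hr.ne')
  have hgz : dslope F c z ≠ 0 := hgne (hz.le.trans_lt hrε)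
  simp only [← sub_smul_dslope_of_zero hFc z, smul_eq_mul]
  field_simp

/-- The residue of `z ↦ e^{a z}/(e^z + 1)^2` at `z = iπ` is `-(1-a) e^{i a π}`, expressed via
small circle integrals: `∮_{|z - iπ| = r} f = 2πi · Res`. -/
theorem stmt4 (a : ℂ) :
    ∃ ε > 0, ∀ r : ℝ, 0 < r → r < ε →
      circleIntegral (fun z => Complex.exp (a * z) / (Complex.exp z + 1) ^ 2)
          ((Real.pi : ℂ) * I) r
        = 2 * (Real.pi : ℂ) * I * (-(1 - a) * Complex.exp (I * a * (Real.pi : ℂ))) := by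
  set c : ℂ := Real.pi * I
  have hexp_c : exp c = -1 := exp_pi_mul_I
  have hF : Differentiable ℂ (fun z => exp z + 1) := differentiable_exp.add_const 1
  have hF' : deriv (fun z => exp z + 1) c = -1 := by simp [hexp_c]
  have hF'' : iteratedDeriv 2 (fun z => exp z + 1) c = -1 := by
    have hderiv : deriv (fun z => exp z + 1) = exp := funext fun z => by simp
    rw [iteratedDeriv_succ, iteratedDeriv_one, hderiv, Complex.deriv_exp, hexp_c]
  obtain ⟨ε, hε, hres⟩ := exists_circleIntegral_div_sq_of_simple_zero (c := c) hF
    (ψ := fun z => exp (a * z)) (by fun_prop) (by simp [hexp_c]) (by rw [hF']; norm_num)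
  refine ⟨ε, hε, fun r hr hrε => ?_⟩
  rw [hres r hr hrε]
  congr 1
  have hg := (hF.analyticAt c).hasDerivAt_dslope
  rw [hF''] at hg
  have hgc : dslope (fun z => exp z + 1) c c = -1 := by rw [dslope_same, hF']
  have hψ : HasDerivAt (fun z => exp (a * z)) (exp (a * c) * a) c := by
    simpa using ((hasDerivAt_id c).const_mul a).cexp
  rw [(hψ.fun_div (hg.fun_pow 2) (by rw [hgc]; norm_num)).deriv, hgc,
    show a * c = I * a * Real.pi by ring]
  ring
end

section
/- The residue of the function z ↦ e^{a z}/(e^z + 1)^3 at z = iπ equals -((2 - a)(1 - a)/2) e^{i a π}. -/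
/-!
When `e^c = -1`, the entire function `(e^z + 1)^3` vanishes to order three at `c`, so
`(e^z + 1)^3 = (z - c)^3 G(z)` with `G` entire. The Taylor coefficients of `G` at `c` are those of
`(e^z + 1)^3 = e^{3z} + 3e^{2z} + 3e^z + 1` shifted by three, which gives `G(c) = -1`,
`G'(c) = -3/2`, `G''(c) = -5/2`. Cauchy's integral formula for the second derivative turns the
circle integral of `e^{az}/(z - c)^3 G(z)` into `πi (e^{az}/G)''(c)`, and the quotient rule gives
`(e^{az}/G)''(c) = -(2 - a)(1 - a) e^{ac}`.
-/

open Complex Function Finset Metric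

section IteratedDeriv

variable {𝕜 : Type*} [NontriviallyNormedField 𝕜]

theorem iteratedDeriv_sub_const_self (c : 𝕜) (i : ℕ) :
    iteratedDeriv i (fun z => z - c) c = if i = 1 then 1 else 0 := by
  rw [congrFun (iteratedDeriv_comp_sub_const i (fun z : 𝕜 => z) c) c, sub_self,
    iteratedDeriv_fun_id_zero]

theorem AnalyticAt.iteratedDeriv_succ_eq_mul_iteratedDeriv_dslope [CompleteSpace 𝕜]
    {f : 𝕜 → 𝕜} {c : 𝕜} (hf : AnalyticAt 𝕜 f c) (n : ℕ) :
    iteratedDeriv (n + 1) f c = (n + 1) * iteratedDeriv n (dslope f c) c := by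
  obtain ⟨p, hp⟩ := hf
  have hg : AnalyticAt 𝕜 (dslope f c) c := hp.has_fpower_series_dslope_fslope.analyticAt
  have hfac : f = fun z => f c + (z - c) * dslope f c z := by
    funext z
    rw [← smul_eq_mul, sub_smul_dslope, add_sub_cancel]
  conv_lhs => rw [hfac]
  rw [iteratedDeriv_const_add n.succ_pos, iteratedDeriv_fun_mul (by fun_prop) hg.contDiffAt,
    sum_eq_single 1]
  · simp [iteratedDeriv_sub_const_self]
  · intro i _ hi
    simp [iteratedDeriv_sub_const_self, hi]
  · simp

theorem AnalyticAt.iteratedDeriv_add_eq_descFactorial_mul_iterate_dslope [CompleteSpace 𝕜]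
    {f : 𝕜 → 𝕜} {c : 𝕜} (hf : AnalyticAt 𝕜 f c) (k n : ℕ) :
    iteratedDeriv (n + k) f c
      = (n + k).descFactorial k * iteratedDeriv n ((swap dslope c)^[k] f) c := by
  obtain ⟨p, hp⟩ := hf
  induction k generalizing n with
  | zero => simp
  | succ k ih =>
    have hk : AnalyticAt 𝕜 ((swap dslope c)^[k] f) c :=
      (hp.has_fpower_series_iterate_dslope_fslope k).analyticAt
    rw [← add_assoc, add_right_comm, ih, hk.iteratedDeriv_succ_eq_mul_iteratedDeriv_dslope,
      iterate_succ_apply' _ k, Nat.descFactorial_succ, Nat.add_sub_cancel]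
    push_cast
    simp only [swap]
    ring

theorem iteratedDeriv_two_div {u v : 𝕜 → 𝕜} {c : 𝕜}
    (hu : ContDiffAt 𝕜 2 u c) (hv : ContDiffAt 𝕜 2 v c) (hvc : v c ≠ 0) :
    iteratedDeriv 2 (fun z => u z / v z) c
      = (iteratedDeriv 2 u c * v c ^ 2 - 2 * deriv u c * deriv v c * v c
          - u c * iteratedDeriv 2 v c * v c + 2 * u c * deriv v c ^ 2) / v c ^ 3 := by
  have hq : ContDiffAt 𝕜 2 (fun z => u z / v z) c := hu.div hv hvc
  have hmul : (fun z => u z / v z) * v =ᶠ[nhds c] u := by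
    filter_upwards [hv.continuousAt.eventually_ne hvc] with z hz
    exact div_mul_cancel₀ (u z) hz
  have h1 := hmul.iteratedDeriv_eq 1
  have h2 := hmul.iteratedDeriv_eq 2
  rw [iteratedDeriv_mul (hq.of_le (by norm_num)) (hv.of_le (by norm_num))] at h1
  rw [iteratedDeriv_mul hq hv] at h2
  simp only [sum_range_succ, sum_range_zero, Nat.choose_zero_right, Nat.choose_one_right,
    Nat.choose_self, Nat.reduceSub, Nat.cast_one, Nat.cast_ofNat, iteratedDeriv_zero,
    iteratedDeriv_one, zero_add, one_mul] at h1 h2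
  have e : u c / v c * v c = u c := div_mul_cancel₀ _ hvc
  field_simp
  linear_combination v c ^ 2 * h2 - 2 * deriv v c * v c * h1
    - (v c * iteratedDeriv 2 v c - 2 * deriv v c ^ 2) * e

end IteratedDeriv

theorem Differentiable.iterate_dslope {f : ℂ → ℂ} (hf : Differentiable ℂ f) (c : ℂ) (k : ℕ) :
    Differentiable ℂ ((swap dslope c)^[k] f) := by
  induction k with
  | zero => exact hf
  | succ k ih =>
    rw [iterate_succ_apply']
    exact differentiableOn_univ.mp <|
      (differentiableOn_dslope Filter.univ_mem).mpr ih.differentiableOn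

theorem iteratedDeriv_exp_add_one_pow_three {m : ℕ} (hm : 0 < m) (z : ℂ) :
    iteratedDeriv m (fun z => (exp z + 1) ^ 3) z
      = 3 ^ m * exp (3 * z) + 3 * (2 ^ m * exp (2 * z)) + 3 * exp z := by
  have hexpand : (fun z => (exp z + 1) ^ 3)
      = fun z => 1 + (exp (3 * z) + 3 * exp (2 * z) + 3 * exp z) := by
    funext z
    rw [show 3 * z = z + z + z by ring, show 2 * z = z + z by ring]
    simp only [exp_add]
    ring
  rw [hexpand, iteratedDeriv_const_add hm, iteratedDeriv_fun_add (by fun_prop) (by fun_prop),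
    iteratedDeriv_fun_add (by fun_prop) (by fun_prop)]
  simp only [iteratedDeriv_const_mul_field, iteratedDeriv_cexp_const_mul,
    iteratedDeriv_eq_iterate (f := exp), Complex.iter_deriv_exp]

/-- `(e^z + 1)^3 / (z - c)^3`, extended analytically to `z = c` when `e^c = -1`. -/
noncomputable def expAddOneCubeQuot (c : ℂ) : ℂ → ℂ :=
  (swap dslope c)^[3] fun z => (exp z + 1) ^ 3

section Pole

variable {c : ℂ}

theorem iteratedDeriv_exp_add_one_pow_three_of_exp_eq (hc : exp c = -1) {m : ℕ} (hm : 0 < m) :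
    iteratedDeriv m (fun z => (exp z + 1) ^ 3) c = -3 ^ m + 3 * 2 ^ m - 3 := by
  have h2 : exp (2 * c) = 1 := by rw [two_mul, exp_add, hc]; norm_num
  have h3 : exp (3 * c) = -1 := by rw [show 3 * c = 2 * c + c by ring, exp_add, h2, hc]; norm_num
  rw [iteratedDeriv_exp_add_one_pow_three hm, h2, h3, hc]
  ring

theorem iteratedDeriv_expAddOneCubeQuot (hc : exp c = -1) (n : ℕ) :
    iteratedDeriv n (expAddOneCubeQuot c) c
      = (-3 ^ (n + 3) + 3 * 2 ^ (n + 3) - 3) / (n + 3).descFactorial 3 := by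
  have h := (Differentiable.analyticAt (by fun_prop) c : AnalyticAt ℂ (fun z => (exp z + 1) ^ 3) c)
    |>.iteratedDeriv_add_eq_descFactorial_mul_iterate_dslope 3 n
  rw [iteratedDeriv_exp_add_one_pow_three_of_exp_eq hc (by omega)] at h
  rw [expAddOneCubeQuot, h, mul_div_cancel_left₀]
  exact_mod_cast (Nat.descFactorial_pos.mpr (by omega)).ne'

theorem differentiable_expAddOneCubeQuot : Differentiable ℂ (expAddOneCubeQuot c) :=
  Differentiable.iterate_dslope (f := fun z => (exp z + 1) ^ 3) (by fun_prop) c 3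

theorem exp_add_one_pow_three_eq (hc : exp c = -1) (z : ℂ) :
    (exp z + 1) ^ 3 = (z - c) ^ 3 * expAddOneCubeQuot c z := by
  refine (pow_sub_smul_iterate_dslope_of_zero (f := fun z => (exp z + 1) ^ 3) 3
    (fun k hk => ?_) z).symm
  have h := (Differentiable.analyticAt (by fun_prop) c : AnalyticAt ℂ (fun z => (exp z + 1) ^ 3) c)
    |>.iteratedDeriv_add_eq_descFactorial_mul_iterate_dslope k 0
  rw [zero_add, iteratedDeriv_zero, Nat.descFactorial_self] at h
  rcases k.eq_zero_or_pos with rfl | hk0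
  · simp [hc]
  rw [iteratedDeriv_exp_add_one_pow_three_of_exp_eq hc hk0,
    show (-3 ^ k + 3 * 2 ^ k - 3 : ℂ) = 0 by interval_cases k <;> norm_num, eq_comm,
    mul_eq_zero] at h
  exact h.resolve_left (mod_cast (Nat.factorial_pos k).ne')

theorem iteratedDeriv_two_exp_mul_div_expAddOneCubeQuot (hc : exp c = -1) (a : ℂ) :
    iteratedDeriv 2 (fun z => exp (a * z) / expAddOneCubeQuot c z) c
      = -((2 - a) * (1 - a)) * exp (a * c) := by
  have hG0 := iteratedDeriv_expAddOneCubeQuot hc 0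
  have hG1 := iteratedDeriv_expAddOneCubeQuot hc 1
  have hG2 := iteratedDeriv_expAddOneCubeQuot hc 2
  simp only [iteratedDeriv_zero, iteratedDeriv_one] at hG0 hG1
  norm_num [Nat.descFactorial] at hG0 hG1 hG2
  have hu1 : deriv (fun z => exp (a * z)) c = a * exp (a * c) := by
    simpa using congrFun (iteratedDeriv_cexp_const_mul 1 a) c
  rw [iteratedDeriv_two_div (by fun_prop) differentiable_expAddOneCubeQuot.contDiff.contDiffAt
    (by rw [hG0]; norm_num), hG0, hG1, hG2, hu1, iteratedDeriv_cexp_const_mul]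
  ring

theorem circleIntegral_exp_mul_div_exp_add_one_pow_three (hc : exp c = -1) (a : ℂ) :
    ∃ ε > 0, ∀ r : ℝ, 0 < r → r < ε →
      (∮ z in C(c, r), exp (a * z) / (exp z + 1) ^ 3)
        = 2 * Real.pi * I * (-((2 - a) * (1 - a) / 2) * exp (a * c)) := by
  set G := expAddOneCubeQuot c with hG_def
  have hG : Differentiable ℂ G := differentiable_expAddOneCubeQuot
  have hGc : G c ≠ 0 := by
    simpa using (iteratedDeriv_expAddOneCubeQuot hc 0).trans_ne (by norm_num [Nat.descFactorial])
  obtain ⟨ε, hε, hball⟩ :=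
    Metric.eventually_nhds_iff_ball.mp (hG.continuous.continuousAt.eventually_ne hGc)
  refine ⟨ε, hε, fun r hr hrε => ?_⟩
  have hF : DifferentiableOn ℂ (fun z => exp (a * z) / G z) (closedBall c r) :=
    fun z hz => ((by fun_prop : Differentiable ℂ fun z => exp (a * z)) z).div (hG z)
      (hball z (closedBall_subset_ball hrε hz)) |>.differentiableWithinAt
  calc (∮ z in C(c, r), exp (a * z) / (exp z + 1) ^ 3)
      = ∮ z in C(c, r), (1 / (z - c) ^ (2 + 1)) • (exp (a * z) / G z) := by
        refine circleIntegral.integral_congr hr.le fun z hz => ?_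
        have hzc : z - c ≠ 0 := sub_ne_zero.mpr (ne_of_mem_sphere hz hr.ne')
        rw [exp_add_one_pow_three_eq hc, ← hG_def, smul_eq_mul]
        field_simp
    _ = (2 * Real.pi * I / (2 : ℕ).factorial) • iteratedDeriv 2 (fun z => exp (a * z) / G z) c :=
        hF.circleIntegral_one_div_sub_center_pow_smul hr 2
    _ = _ := by
        rw [iteratedDeriv_two_exp_mul_div_expAddOneCubeQuot hc, smul_eq_mul, Nat.factorial_two,
          Nat.cast_ofNat]
        ring

end Pole

/-- The residue of `z ↦ e^{a z}/(e^z + 1)^3` at `z = iπ` is `-((2-a)(1-a)/2) e^{i a π}`,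
expressed via small circle integrals: `∮_{|z - iπ| = r} f = 2πi · Res`. -/
theorem stmt5 (a : ℂ) :
    ∃ ε > 0, ∀ r : ℝ, 0 < r → r < ε →
      circleIntegral (fun z => Complex.exp (a * z) / (Complex.exp z + 1) ^ 3)
          ((Real.pi : ℂ) * I) r
        = 2 * (Real.pi : ℂ) * I * (-((2 - a) * (1 - a) / 2) * Complex.exp (I * a * (Real.pi : ℂ))) := by
  rw [show I * a * Real.pi = a * (Real.pi * I) by ring]
  exact circleIntegral_exp_mul_div_exp_add_one_pow_three exp_pi_mul_I a
end

section
/- Let n ≥ 1, s > n/2, ω > 0, σ > 0, and define I_j = ∫_{ℝⁿ}((2π|ξ|)^{2s}+ω)^{-j} dξ for j = 1,2,3. Then the quantity I_3 - ((2σ+1)/(2σ)) · I_2²/I_1 has the same sign as (σ - (2s - n)/n). In particular it is negative if and only if 0 < σ < 2s/n - 1. -/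
open Real MeasureTheory Module

/-! Write `J_j(t) = ∫ ((2π|ξ|)^{2s} + t)^{-j} dξ`. Since the symbol is homogeneous of degree
`2s`, the substitution `ξ ↦ t^{1/(2s)} ξ` gives `J_j(t) = t^{n/(2s) - j} J_j(1)`, while
differentiating under the integral sign gives `J_j' = -j J_{j+1}`. Comparing the two derivatives
at `ω` yields `j ω J_{j+1}(ω) = (j - n/(2s)) J_j(ω)`, so `I₂` and `I₃` are explicit multiples of
`I₁ > 0`, and the Vakhitov–Kolokolov quantity is a positive multiple of `σ - (2s - n)/n`. -/

noncomputable def resolventIntegral {α : Type*} [MeasurableSpace α] (μ : Measure α) (g : α → ℝ)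
    (j : ℕ) (t : ℝ) : ℝ :=
  ∫ x, ((g x + t) ^ j)⁻¹ ∂μ

section Resolvent

variable {α : Type*} [MeasurableSpace α] {μ : Measure α} {g : α → ℝ}

lemma integrable_inv_add_pow_succ (hg : ∀ x, 0 ≤ g x) (hgm : Measurable g) {t : ℝ} (ht : 0 < t)
    (hint : Integrable (fun x ↦ (g x + t)⁻¹) μ) (k : ℕ) :
    Integrable (fun x ↦ ((g x + t) ^ (k + 1))⁻¹) μ := by
  refine (hint.const_mul (t ^ k)⁻¹).mono'
    ((hgm.add_const t).pow_const _).inv.aestronglyMeasurable (ae_of_all _ fun x ↦ ?_)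
  have hgx := hg x
  rw [norm_inv, norm_pow, Real.norm_of_nonneg (by positivity), pow_succ, mul_inv]
  gcongr
  linarith

lemma hasDerivAt_resolventIntegral (hg : ∀ x, 0 ≤ g x) (hgm : Measurable g)
    (hint : ∀ t > 0, Integrable (fun x ↦ (g x + t)⁻¹) μ) {ω : ℝ} (hω : 0 < ω) (k : ℕ) :
    HasDerivAt (resolventIntegral μ g (k + 1))
      (-((k + 1) * resolventIntegral μ g (k + 2) ω)) ω := by
  have hball : Metric.ball ω (ω / 2) ∈ nhds ω := Metric.ball_mem_nhds ω (half_pos hω)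
  have half_lt : ∀ t ∈ Metric.ball ω (ω / 2), ω / 2 < t := fun t ht ↦ by
    rw [Metric.mem_ball, Real.dist_eq, abs_sub_lt_iff] at ht
    linarith
  have hmeas : ∀ (j : ℕ) t, AEStronglyMeasurable (fun x ↦ ((g x + t) ^ j)⁻¹) μ := fun j t ↦
    ((hgm.add_const t).pow_const j).inv.aestronglyMeasurable
  have h := hasDerivAt_integral_of_dominated_loc_of_deriv_le (μ := μ)
    (F := fun t x ↦ ((g x + t) ^ (k + 1))⁻¹)
    (F' := fun t x ↦ -((k + 1) * ((g x + t) ^ (k + 2))⁻¹))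
    (bound := fun x ↦ (k + 1) * ((g x + ω / 2) ^ (k + 2))⁻¹) hball
    (Filter.Eventually.of_forall fun t ↦ hmeas _ t)
    (integrable_inv_add_pow_succ hg hgm hω (hint ω hω) k)
    ((hmeas _ ω).const_mul _).neg
    (ae_of_all _ fun x t ht ↦ ?_)
    ((integrable_inv_add_pow_succ hg hgm (half_pos hω) (hint _ (half_pos hω)) (k + 1)).const_mul _)
    (ae_of_all _ fun x t ht ↦ ?_)
  · rw [integral_neg, integral_const_mul] at h
    exact h.2
  · have hgx := hg x
    have ht0 : 0 < t := (half_pos hω).trans (half_lt t ht)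
    rw [norm_neg, Real.norm_of_nonneg (by positivity)]
    gcongr
    exact (half_lt t ht).le
  · have hpos : 0 < g x + t := by linarith [hg x, half_lt t ht]
    refine ((((hasDerivAt_id' t).const_add (g x)).fun_pow (k + 1)).fun_inv
      (pow_ne_zero _ hpos.ne')).congr_deriv ?_
    rw [Nat.add_sub_cancel]
    field_simp
    push_cast
    ring

lemma resolventIntegral_pos [NeZero μ] (hg : ∀ x, 0 ≤ g x) (hgm : Measurable g) {t : ℝ} (ht : 0 < t)
    (hint : Integrable (fun x ↦ (g x + t)⁻¹) μ) (k : ℕ) :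
    0 < resolventIntegral μ g (k + 1) t := by
  have hpos : ∀ x, 0 < ((g x + t) ^ (k + 1))⁻¹ := fun x ↦ by
    have := hg x
    positivity
  rw [resolventIntegral, integral_pos_iff_support_of_nonneg (fun x ↦ (hpos x).le)
    (integrable_inv_add_pow_succ hg hgm ht hint k),
    Function.support_eq_univ fun x ↦ (hpos x).ne']
  exact Measure.measure_univ_pos.2 (NeZero.ne μ)

end Resolvent

lemma one_add_rpow_le_two_rpow_mul {r p : ℝ} (hr : 0 ≤ r) (hp : 0 ≤ p) :
    (1 + r) ^ p ≤ 2 ^ p * (1 + r ^ p) := by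
  calc (1 + r) ^ p ≤ (2 * max 1 r) ^ p :=
        rpow_le_rpow (by positivity) (by linarith [le_max_left 1 r, le_max_right 1 r]) hp
    _ = 2 ^ p * max 1 r ^ p := mul_rpow zero_le_two (by positivity)
    _ ≤ 2 ^ p * (1 + r ^ p) := by
        gcongr
        rcases max_cases 1 r with ⟨h, -⟩ | ⟨h, -⟩ <;> rw [h]
        · linarith [one_rpow p, rpow_nonneg hr p]
        · linarith [one_rpow p]

lemma mul_norm_smul_rpow {E : Type*} [NormedAddCommGroup E] [NormedSpace ℝ E] {c : ℝ} (hc : 0 ≤ c)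
    (p : ℝ) {R : ℝ} (hR : 0 < R) (ξ : E) : (c * ‖R • ξ‖) ^ p = R ^ p * (c * ‖ξ‖) ^ p := by
  rw [norm_smul, norm_of_nonneg hR.le, mul_left_comm, mul_rpow hR.le (by positivity)]

section Homogeneous

variable {E : Type*} [NormedAddCommGroup E] [NormedSpace ℝ E] [FiniteDimensional ℝ E]
  [MeasurableSpace E] [BorelSpace E] (μ : Measure E) [μ.IsAddHaarMeasure] {g : E → ℝ} {p : ℝ}

lemma resolventIntegral_eq_rpow_mul (hp : 0 < p) (hhom : ∀ R > 0, ∀ ξ, g (R • ξ) = R ^ p * g ξ)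
    {t : ℝ} (ht : 0 < t) (j : ℕ) :
    resolventIntegral μ g j t = t ^ ((finrank ℝ E : ℝ) / p - j) * resolventIntegral μ g j 1 := by
  set R := t ^ p⁻¹
  have hR : 0 < R := rpow_pos_of_pos ht _
  have hRp : R ^ p = t := by rw [← rpow_mul ht.le, inv_mul_cancel₀ hp.ne', rpow_one]
  have hscale : ∀ ξ, ((g (R • ξ) + t) ^ j)⁻¹ = (t ^ j)⁻¹ * ((g ξ + 1) ^ j)⁻¹ := fun ξ ↦ by
    rw [hhom R hR, hRp, ← mul_inv, ← mul_pow, mul_add, mul_one]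
  have h := Measure.integral_comp_smul μ (fun ξ ↦ ((g ξ + t) ^ j)⁻¹) R
  simp only [hscale, integral_const_mul, smul_eq_mul] at h
  have hRd : R ^ finrank ℝ E = t ^ ((finrank ℝ E : ℝ) / p) := by
    rw [← rpow_natCast, ← rpow_mul ht.le, inv_mul_eq_div]
  rw [abs_of_pos (by positivity), hRd] at h
  rw [resolventIntegral, resolventIntegral, rpow_sub ht, rpow_natCast, div_eq_mul_inv, mul_assoc,
    h, ← mul_assoc, mul_inv_cancel₀ (by positivity), one_mul]

lemma integrable_inv_mul_norm_rpow_add {c t : ℝ} (hc : 0 < c) (hp : (finrank ℝ E : ℝ) < p)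
    (ht : 0 < t) : Integrable (fun ξ : E ↦ ((c * ‖ξ‖) ^ p + t)⁻¹) μ := by
  have hp0 : 0 ≤ p := (Nat.cast_nonneg _).trans hp.le
  set m := min (c ^ p) t
  have hm : 0 < m := lt_min (rpow_pos_of_pos hc p) ht
  refine ((integrable_one_add_norm hp).const_mul (2 ^ p / m)).mono'
    ((((measurable_norm.const_mul c).pow_const p).add_const t).inv.aestronglyMeasurable)
    (ae_of_all _ fun ξ ↦ ?_)
  have hξ : 0 ≤ ‖ξ‖ := norm_nonneg ξ
  have hlower : m * (1 + ‖ξ‖ ^ p) ≤ (c * ‖ξ‖) ^ p + t := by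
    rw [mul_rpow hc.le hξ, mul_one_add, add_comm]
    gcongr
    · exact min_le_left _ _
    · exact min_le_right _ _
  have hupper := one_add_rpow_le_two_rpow_mul hξ hp0
  rw [norm_inv, Real.norm_of_nonneg (by positivity), rpow_neg (by positivity)]
  field_simp
  calc m * (1 + ‖ξ‖) ^ p ≤ m * (2 ^ p * (1 + ‖ξ‖ ^ p)) := by gcongr
    _ ≤ ((c * ‖ξ‖) ^ p + t) * 2 ^ p := by nlinarith [rpow_pos_of_pos two_pos p]

lemma succ_mul_mul_resolventIntegral_succ_succ (hg : ∀ ξ, 0 ≤ g ξ)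
    (hgm : Measurable g) (hint : ∀ t > 0, Integrable (fun ξ ↦ (g ξ + t)⁻¹) μ) (hp : 0 < p)
    (hhom : ∀ R > 0, ∀ ξ, g (R • ξ) = R ^ p * g ξ) {ω : ℝ} (hω : 0 < ω) (k : ℕ) :
    (k + 1) * ω * resolventIntegral μ g (k + 2) ω
      = (k + 1 - finrank ℝ E / p) * resolventIntegral μ g (k + 1) ω := by
  have hJ : ∀ t > 0, resolventIntegral μ g (k + 1) t
      = t ^ (finrank ℝ E / p - (k + 1)) * resolventIntegral μ g (k + 1) 1 := fun t ht ↦ by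
    exact_mod_cast resolventIntegral_eq_rpow_mul μ hp hhom ht (k + 1)
  have hscale : HasDerivAt (resolventIntegral μ g (k + 1))
      ((finrank ℝ E / p - (k + 1)) * ω ^ (finrank ℝ E / p - (k + 1) - 1)
        * resolventIntegral μ g (k + 1) 1) ω := by
    refine ((hasDerivAt_rpow_const (Or.inl hω.ne')).mul_const _).congr_of_eventuallyEq ?_
    filter_upwards [Ioi_mem_nhds hω] with t ht
    exact hJ t ht
  have hderiv := (hasDerivAt_resolventIntegral hg hgm hint hω k).unique hscale
  have hω_mul : ω * ω ^ (finrank ℝ E / p - (k + 1) - 1) = ω ^ (finrank ℝ E / p - (k + 1)) := by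
    rw [rpow_sub_one hω.ne']
    field_simp
  rw [hJ ω hω]
  linear_combination (-ω) * hderiv
    - (finrank ℝ E / p - (k + 1)) * resolventIntegral μ g (k + 1) 1 * hω_mul

end Homogeneous

lemma vakhitovKolokolov_eq_mul {a ω σ I₁ I₂ I₃ : ℝ} (hω : ω ≠ 0) (hσ : σ ≠ 0) (ha : a ≠ 0)
    (hI₁ : I₁ ≠ 0) (h₂ : ω * I₂ = (1 - a) * I₁) (h₃ : 2 * ω * I₃ = (2 - a) * I₂) :
    I₃ - (2 * σ + 1) / (2 * σ) * I₂ ^ 2 / I₁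
      = (1 - a) * a * I₁ / (2 * σ * ω ^ 2) * (σ - (1 - a) / a) := by
  have e₂ : I₂ = (1 - a) * I₁ / ω := by field_simp; linarith
  have e₃ : I₃ = (2 - a) * (1 - a) * I₁ / (2 * ω ^ 2) := by
    field_simp; rw [e₂] at h₃; field_simp at h₃; linarith
  rw [e₂, e₃]
  field_simp
  ring

lemma Real.sign_mul_of_pos {c : ℝ} (hc : 0 < c) (x : ℝ) : Real.sign (c * x) = Real.sign x := by
  rcases lt_trichotomy x 0 with h | rfl | h
  · rw [Real.sign_of_neg h, Real.sign_of_neg (mul_neg_of_pos_of_neg hc h)]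
  · rw [mul_zero]
  · rw [Real.sign_of_pos h, Real.sign_of_pos (mul_pos hc h)]

/-- The Vakhitov–Kolokolov quantity `I₃ - ((2σ+1)/(2σ)) I₂²/I₁` has the same sign as
`σ - (2s-n)/n`; in particular it is negative iff `0 < σ < 2s/n - 1`. -/
theorem stmt9 (n : ℕ) (hn : 1 ≤ n) (s ω σ : ℝ) (hs : (n : ℝ) / 2 < s) (hω : 0 < ω)
    (hσ : 0 < σ) (I1 I2 I3 : ℝ)
    (hI1 : I1 = ∫ ξ : EuclideanSpace ℝ (Fin n), ((2 * π * ‖ξ‖) ^ (2 * s) + ω)⁻¹)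
    (hI2 : I2 = ∫ ξ : EuclideanSpace ℝ (Fin n), (((2 * π * ‖ξ‖) ^ (2 * s) + ω) ^ 2)⁻¹)
    (hI3 : I3 = ∫ ξ : EuclideanSpace ℝ (Fin n), (((2 * π * ‖ξ‖) ^ (2 * s) + ω) ^ 3)⁻¹) :
    Real.sign (I3 - (2 * σ + 1) / (2 * σ) * I2 ^ 2 / I1)
        = Real.sign (σ - (2 * s - n) / n)
      ∧ (I3 - (2 * σ + 1) / (2 * σ) * I2 ^ 2 / I1 < 0 ↔ σ < 2 * s / n - 1) := by
  have hs0 : 0 < s := lt_of_le_of_lt (by positivity) hs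
  have hn0 : (0 : ℝ) < n := by exact_mod_cast hn
  have ha : 0 < (n : ℝ) / (2 * s) := by positivity
  have ha_lt_one : (n : ℝ) / (2 * s) < 1 := by rw [div_lt_one (by positivity)]; linarith
  set g : EuclideanSpace ℝ (Fin n) → ℝ := fun ξ ↦ (2 * π * ‖ξ‖) ^ (2 * s)
  have hg : ∀ ξ, 0 ≤ g ξ := fun ξ ↦ rpow_nonneg (by positivity) _
  have hgm : Measurable g := (measurable_norm.const_mul _).pow_const _
  have hint : ∀ t > 0, Integrable (fun ξ ↦ (g ξ + t)⁻¹) := fun t ht ↦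
    integrable_inv_mul_norm_rpow_add volume (by positivity)
      (by rw [finrank_euclideanSpace_fin]; linarith) ht
  have hhom : ∀ R > 0, ∀ ξ, g (R • ξ) = R ^ (2 * s) * g ξ := fun R hR ξ ↦
    mul_norm_smul_rpow (by positivity) _ hR ξ
  have hrec := succ_mul_mul_resolventIntegral_succ_succ volume hg hgm hint (by positivity) hhom hω
  have hI1_pos : 0 < I1 := by
    simpa [resolventIntegral, hI1] using resolventIntegral_pos hg hgm hω (hint ω hω) 0
  have h₂ : ω * I2 = (1 - n / (2 * s)) * I1 := by
    simpa [resolventIntegral, hI1, hI2, finrank_euclideanSpace_fin] using hrec 0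
  have h₃ : 2 * ω * I3 = (2 - n / (2 * s)) * I2 := by
    simpa [resolventIntegral, hI2, hI3, finrank_euclideanSpace_fin, one_add_one_eq_two]
      using hrec 1
  have hcoef : 0 < (1 - n / (2 * s)) * (n / (2 * s)) * I1 / (2 * σ * ω ^ 2) := by
    have : 0 < 1 - (n : ℝ) / (2 * s) := by linarith
    positivity
  rw [vakhitovKolokolov_eq_mul hω.ne' hσ.ne' ha.ne' hI1_pos.ne' h₂ h₃,
    show (1 - n / (2 * s)) / (n / (2 * s)) = (2 * s - n) / n by field_simp]
  refine ⟨Real.sign_mul_of_pos hcoef _, (smul_neg_iff_of_pos_left hcoef).trans ?_⟩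
  rw [sub_div, div_self hn0.ne', sub_neg]
end

section
/- Let n ≥ 1, ω ≠ 0, s > 0, σ > 0, and suppose φ ∈ H^s(ℝⁿ) ∩ C(ℝⁿ) is a nonzero weak solution of (-Δ)^s φ + ω φ - |φ(0)|^{2σ}φ(0)δ₀ = 0. Then either (ω > 0 and s > n/2) or (ω < 0 and s < n/2). -/
/-!
Testing the equation against `ψ = 𝓕⁻¹ g` with `g` smooth and compactly supported shows that
`((2π|ξ|)^{2s} + ω) F(ξ) = c := |φ(0)|^{2σ} φ(0)` for a.e. `ξ`, and `c ≠ 0` because `φ ≠ 0`.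
Hence `ξ ↦ 1 / ((2π|ξ|)^{2s} + ω)` is integrable, like `F`. In polar coordinates this fails when
`ω < 0`, since the symbol then has a simple zero on a sphere, and when `ω > 0` and `2s ≤ n`,
since the radial integrand then decays only like `1 / r`.
-/

open Real MeasureTheory ComplexConjugate

open Filter Set Asymptotics FourierTransform Topology

section FourierDelta

variable {E : Type*} [NormedAddCommGroup E] [InnerProductSpace ℝ E] [FiniteDimensional ℝ E]
  [MeasurableSpace E] [BorelSpace E]

-- In the language of distributions: `G = 𝓕 (c δ₀)`.
theorem ae_eq_const_of_integral_mul_conj_fourier_eq {G : E → ℂ} (hG : LocallyIntegrable G)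
    (c : ℂ) (h : ∀ ψ : SchwartzMap E ℂ, ∫ ξ, G ξ * conj (𝓕 (⇑ψ : E → ℂ) ξ) = c * conj (ψ 0)) :
    ∀ᵐ ξ, G ξ = c := by
  refine ae_eq_of_integral_contDiff_smul_eq hG (locallyIntegrable_const c) fun g hg hgc => ?_
  let g' : SchwartzMap E ℂ := HasCompactSupport.toSchwartzMap
    (hgc.comp_left Complex.ofReal_zero) (Complex.ofRealCLM.contDiff.comp hg)
  have hfourier : 𝓕 (⇑(𝓕⁻ g' : SchwartzMap E ℂ) : E → ℂ) = fun ξ => (g ξ : ℂ) := by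
    rw [← SchwartzMap.fourier_coe, fourier_fourierInv_eq]; rfl
  have hzero : (𝓕⁻ g' : SchwartzMap E ℂ) 0 = ((∫ x, g x : ℝ) : ℂ) := by
    rw [SchwartzMap.fourierInv_coe, Real.fourierInv_eq, ← integral_complex_ofReal]
    simp only [inner_zero_right, AddChar.map_zero_eq_one, one_smul]
    rfl
  have := h (𝓕⁻ g')
  rw [hfourier, hzero] at this
  simp only [Complex.conj_ofReal] at this
  rw [integral_smul_const, Complex.real_smul, mul_comm, ← this]
  congr 1 with x
  rw [Complex.real_smul, mul_comm]

end FourierDelta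

theorem MeasureTheory.Measure.addHaar_setOf_comp_norm_eq {E : Type*} [NormedAddCommGroup E] [NormedSpace ℝ E]
    [MeasurableSpace E] [BorelSpace E] [FiniteDimensional ℝ E] [Nontrivial E] (μ : Measure E)
    [μ.IsAddHaarMeasure] {f : ℝ → ℝ} (hf : InjOn f (Ici 0)) (t : ℝ) :
    μ {x | f ‖x‖ = t} = 0 := by
  by_cases h : ∃ x₀ : E, f ‖x₀‖ = t
  · obtain ⟨x₀, hx₀⟩ := h
    refine measure_mono_null (fun x hx => ?_) (Measure.addHaar_sphere μ 0 ‖x₀‖)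
    rw [mem_sphere_zero_iff_norm]
    exact hf (norm_nonneg x) (norm_nonneg x₀) (hx.trans hx₀.symm)
  · push Not at h
    simp [h]

theorem integrable_inv_of_ae_mul_eq {α : Type*} [MeasurableSpace α] {μ : Measure α}
    {F : α → ℂ} {m : α → ℝ} (hF : Integrable F μ) (hm : AEMeasurable m μ) {c : ℂ} (hc : c ≠ 0)
    (h : ∀ᵐ x ∂μ, (m x : ℂ) * F x = c) : Integrable (fun x => (m x)⁻¹) μ := by
  refine (hF.norm.div_const ‖c‖).mono' hm.inv.aestronglyMeasurable ?_
  filter_upwards [h] with x hx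
  have hF0 : F x ≠ 0 := right_ne_zero_of_mul (hx ▸ hc)
  rw [← hx, norm_mul, Complex.norm_real, norm_inv, div_mul_cancel_right₀ (norm_ne_zero_iff.2 hF0)]

theorem not_intervalIntegrable_inv_of_differentiableAt {f : ℝ → ℝ} {a b c : ℝ}
    (hf : DifferentiableAt ℝ f c) (hfc : f c = 0) (hne : ∀ᶠ x in 𝓝[≠] c, f x ≠ 0)
    (hab : a ≠ b) (hc : c ∈ uIcc a b) : ¬IntervalIntegrable (fun x => (f x)⁻¹) volume a b := by
  refine not_intervalIntegrable_of_sub_inv_isBigO_punctured ?_ hab hc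
  have hO := hf.isBigO_sub.mono (nhdsWithin_le_nhds (s := {c}ᶜ))
  simp only [hfc, sub_zero] at hO
  exact hO.inv_rev (hne.mono fun x hx h => absurd h hx)

theorem not_integrableOn_Ioi_pow_mul_inv_of_isBigO {f : ℝ → ℝ} {k : ℕ}
    (hf : f =O[atTop] (· ^ (k + 1))) (hne : ∀ᶠ x in atTop, f x ≠ 0) (a : ℝ) :
    ¬IntegrableOn (fun x => x ^ k * (f x)⁻¹) (Ioi a) := by
  have hinv : (fun x : ℝ => x⁻¹) =O[atTop] fun x => x ^ k * (f x)⁻¹ := by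
    refine ((isBigO_refl (· ^ k) atTop).mul
      (hf.inv_rev (hne.mono fun x hx h => absurd h hx))).congr' ?_ EventuallyEq.rfl
    filter_upwards [eventually_gt_atTop 0] with x hx
    field_simp
    ring
  have hlog : ∀ᶠ x in atTop, HasDerivAt log x⁻¹ x := by
    filter_upwards [eventually_gt_atTop 0] with x hx using hasDerivAt_log hx.ne'
  exact not_integrableOn_of_tendsto_norm_atTop_of_deriv_isBigO_filter atTop (Ioi_mem_atTop a)
    (hlog.mono fun x hx => hx.differentiableAt) (tendsto_norm_atTop_atTop.comp tendsto_log_atTop)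
    ((EventuallyEq.isBigO (hlog.mono fun x hx => hx.deriv)).trans hinv)

/-- The radial profile `r ↦ (2πr)^{2s} + ω` of the Fourier symbol of `(-Δ)^s + ω`. -/
noncomputable def fracSymbol (s ω r : ℝ) : ℝ := (2 * π * r) ^ (2 * s) + ω

section FracSymbol

variable {s ω : ℝ}

theorem continuous_fracSymbol (hs : 0 < s) : Continuous (fracSymbol s ω) :=
  ((continuous_rpow_const (by positivity)).comp (continuous_const_mul (2 * π))).add continuous_const

theorem strictMonoOn_fracSymbol (hs : 0 < s) : StrictMonoOn (fracSymbol s ω) (Ici 0) :=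
  fun x hx y _ hxy => add_lt_add_left (rpow_lt_rpow (by have := mem_Ici.1 hx; positivity)
    (mul_lt_mul_of_pos_left hxy (by positivity)) (by positivity)) ω

theorem fracSymbol_eq_zero_of_neg (hs : 0 < s) (hω : ω < 0) :
    fracSymbol s ω ((-ω) ^ (2 * s)⁻¹ / (2 * π)) = 0 := by
  rw [fracSymbol, mul_div_cancel₀ _ (by positivity), rpow_inv_rpow (by linarith) (by positivity)]
  ring

theorem not_integrableOn_Ioi_pow_mul_fracSymbol_inv_of_neg (hs : 0 < s) (hω : ω < 0) (k : ℕ) :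
    ¬IntegrableOn (fun y => y ^ k * (fracSymbol s ω y)⁻¹) (Ioi 0) := by
  set r₀ := (-ω) ^ (2 * s)⁻¹ / (2 * π)
  have hr₀ : 0 < r₀ := div_pos (rpow_pos_of_pos (by linarith) _) (by positivity)
  have hzero : fracSymbol s ω r₀ = 0 := fracSymbol_eq_zero_of_neg hs hω
  intro hint
  -- `y ^ k * (f y)⁻¹ = (f y / y ^ k)⁻¹`, and `f y / y ^ k` still vanishes simply at `r₀`.
  refine not_intervalIntegrable_inv_of_differentiableAt (f := fun y => fracSymbol s ω y / y ^ k)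
    (a := r₀ / 2) (b := 2 * r₀) (c := r₀) ?_ (by rw [hzero, zero_div]) ?_ (by linarith) ?_ ?_
  · exact ((((differentiableAt_id.const_mul (2 * π)).rpow_const (Or.inl (by positivity))).add_const
      ω).div (differentiableAt_pow k) (pow_ne_zero k hr₀.ne'))
  · filter_upwards [self_mem_nhdsWithin, nhdsWithin_le_nhds (Ioi_mem_nhds hr₀)] with y hy hy0
    exact div_ne_zero (fun h => hy ((strictMonoOn_fracSymbol hs).injOn (mem_Ioi.1 hy0).le hr₀.le
      (h.trans hzero.symm))) (pow_ne_zero k (ne_of_gt hy0))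
  · rw [mem_uIcc]; left; constructor <;> linarith
  · simp only [inv_div]
    simp only [div_eq_mul_inv]
    refine (hint.mono_set fun y hy => ?_).intervalIntegrable
    rw [uIcc_of_le (by linarith)] at hy
    exact lt_of_lt_of_le (by positivity) hy.1

theorem not_integrableOn_Ioi_pow_mul_fracSymbol_inv_of_le (hω : 0 < ω) {k : ℕ}
    (hsk : 2 * s ≤ k + 1) : ¬IntegrableOn (fun y => y ^ k * (fracSymbol s ω y)⁻¹) (Ioi 0) := by
  refine not_integrableOn_Ioi_pow_mul_inv_of_isBigO (IsBigO.of_bound ((2 * π) ^ (2 * s) + ω) ?_)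
    ?_ 0
  · filter_upwards [eventually_ge_atTop 1] with y hy
    have hpow : y ^ (2 * s) ≤ y ^ (k + 1) := by
      exact_mod_cast rpow_le_rpow_of_exponent_le hy hsk
    have hpos : 0 ≤ fracSymbol s ω y := by unfold fracSymbol; positivity
    rw [norm_of_nonneg hpos, norm_of_nonneg (by positivity), fracSymbol,
      mul_rpow (by positivity) (by linarith), add_mul]
    gcongr
    · exact le_mul_of_one_le_right hω.le (one_le_pow₀ hy)
  · filter_upwards [eventually_ge_atTop 0] with y hy
    unfold fracSymbol; positivity

end FracSymbol

theorem stmt14_general (n : ℕ) (hn : 1 ≤ n) (s ω σ : ℝ) (hs : 0 < s) (hω : ω ≠ 0)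
    (F : EuclideanSpace ℝ (Fin n) → ℂ)
    (hF1 : Integrable F)
    (φ : EuclideanSpace ℝ (Fin n) → ℂ) (hφ : φ = FourierTransformInv.fourierInv F)
    (hφne : φ ≠ 0)
    (hweak : ∀ ψ : SchwartzMap (EuclideanSpace ℝ (Fin n)) ℂ,
      ∫ ξ, ((((2 * π * ‖ξ‖) ^ (2 * s) + ω : ℝ)) : ℂ) * F ξ
          * conj (FourierTransform.fourier (⇑ψ : EuclideanSpace ℝ (Fin n) → ℂ) ξ)
        = ((‖φ 0‖ ^ (2 * σ) : ℝ) : ℂ) * φ 0 * conj (ψ 0)) :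
    (0 < ω ∧ (n : ℝ) / 2 < s) ∨ (ω < 0 ∧ s < (n : ℝ) / 2) := by
  have : Nontrivial (EuclideanSpace ℝ (Fin n)) :=
    Module.nontrivial_of_finrank_pos (R := ℝ) (by rw [finrank_euclideanSpace_fin]; omega)
  set c : ℂ := ((‖φ 0‖ ^ (2 * σ) : ℝ) : ℂ) * φ 0
  have hm : Continuous fun ξ : EuclideanSpace ℝ (Fin n) => fracSymbol s ω ‖ξ‖ :=
    (continuous_fracSymbol hs).comp continuous_norm
  have hsol : ∀ᵐ ξ, (fracSymbol s ω ‖ξ‖ : ℂ) * F ξ = c :=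
    ae_eq_const_of_integral_mul_conj_fourier_eq
      ((hF1.locallyIntegrable).continuous_mul (Complex.continuous_ofReal.comp hm)) c hweak
  have hc : c ≠ 0 := by
    intro hc0
    have hF0 : F =ᵐ[volume] 0 := by
      filter_upwards [hsol, measure_eq_zero_iff_ae_notMem.1
        (Measure.addHaar_setOf_comp_norm_eq volume (strictMonoOn_fracSymbol hs).injOn 0)]
        with ξ hξ hne
      exact (mul_eq_zero.1 (hξ.trans hc0)).resolve_left (by exact_mod_cast hne)
    exact hφne (by ext ξ; simp [hφ, Real.fourierInv_congr_ae hF0 ξ, Real.fourierInv_eq])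
  have hint := (integrable_fun_norm_addHaar volume (f := fun r => (fracSymbol s ω r)⁻¹)).1
    (integrable_inv_of_ae_mul_eq hF1 hm.aemeasurable hc hsol)
  simp only [finrank_euclideanSpace_fin, smul_eq_mul] at hint
  rcases hω.lt_or_gt with hneg | hpos
  · exact absurd hint (not_integrableOn_Ioi_pow_mul_fracSymbol_inv_of_neg hs hneg _)
  · refine .inl ⟨hpos, lt_of_not_ge fun hsn => ?_⟩
    exact not_integrableOn_Ioi_pow_mul_fracSymbol_inv_of_le hpos (k := n - 1)
      (by rw [Nat.cast_sub hn, Nat.cast_one]; linarith) hint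

/-- Necessary conditions for existence: if `φ ∈ H^s ∩ C` (encoded via its Fourier transform
`F`, with `φ = 𝓕⁻¹F`) is a nonzero weak solution of
`(-Δ)^s φ + ω φ - |φ(0)|^{2σ}φ(0) δ₀ = 0` with `ω ≠ 0`, then either `ω > 0` and `s > n/2`,
or `ω < 0` and `s < n/2`. -/
theorem stmt14 (n : ℕ) (hn : 1 ≤ n) (s ω σ : ℝ) (hs : 0 < s) (hω : ω ≠ 0)
    (hσ : 0 < σ) (F : EuclideanSpace ℝ (Fin n) → ℂ)
    (hF1 : Integrable F)
    (hF2 : Integrable (fun ξ => ‖F ξ‖ ^ 2))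
    (hF3 : Integrable (fun ξ => (2 * π * ‖ξ‖) ^ (2 * s) * ‖F ξ‖ ^ 2))
    (φ : EuclideanSpace ℝ (Fin n) → ℂ) (hφ : φ = FourierTransformInv.fourierInv F)
    (hφne : φ ≠ 0)
    (hweak : ∀ ψ : SchwartzMap (EuclideanSpace ℝ (Fin n)) ℂ,
      ∫ ξ, ((((2 * π * ‖ξ‖) ^ (2 * s) + ω : ℝ)) : ℂ) * F ξ
          * conj (FourierTransform.fourier (⇑ψ : EuclideanSpace ℝ (Fin n) → ℂ) ξ)
        = ((‖φ 0‖ ^ (2 * σ) : ℝ) : ℂ) * φ 0 * conj (ψ 0)) :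
    (0 < ω ∧ (n : ℝ) / 2 < s) ∨ (ω < 0 ∧ s < (n : ℝ) / 2) :=
  stmt14_general n hn s ω σ hs hω F hF1 φ hφ hφne hweak
end

section
/- Let n ≥ 1, s > n/2, ω > 0, σ > 0. The function φ with Fourier transform φ̂(ξ) = (∫_{ℝⁿ}((2π|η|)^{2s}+ω)^{-1}dη)^{-(1+1/(2σ))}/((2π|ξ|)^{2s}+ω) satisfies (-Δ)^sφ + ωφ = |φ(0)|^{2σ}φ(0)δ₀ in the distributional sense, and φ(0) = (∫_{ℝⁿ}((2π|η|)^{2s}+ω)^{-1}dη)^{-1/(2σ)}. -/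
/-!
Multiplying `φ̂` by the symbol `(2π|ξ|)^{2s} + ω` leaves the constant `k = c^{-(1+1/(2σ))}`, so the
pairing with `ψ̂` is `k · conj (∫ ψ̂) = k · conj (ψ 0)` by Fourier inversion. Likewise
`φ 0 = ∫ φ̂ = k c = c^{-1/(2σ)}`, where `c` is finite and positive because the inverse symbol is
dominated by a multiple of `(1 + |ξ|)^{-2s}` and `2s > n`; hence `|φ 0|^{2σ} φ 0 = c⁻¹ φ 0 = k`.
-/

open Real MeasureTheory ComplexConjugate FourierTransform

theorem Real.one_add_rpow_le_mul_two_pi_mul_rpow_add {p ω t : ℝ} (hp : 0 ≤ p) (hω : 0 < ω)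
    (ht : 0 ≤ t) : (1 + t) ^ p ≤ (1 + 2 ^ p / ω) * ((2 * π * t) ^ p + ω) := by
  have h2πt : 0 ≤ 2 * π * t := by positivity
  have hle_max : 1 + t ≤ max 2 (2 * π * t) := by
    rcases le_total t 1 with h | h
    · exact le_max_of_le_left (by linarith)
    · exact le_max_of_le_right (by nlinarith [pi_gt_three])
  have hmax : max 2 (2 * π * t) ^ p ≤ 2 ^ p + (2 * π * t) ^ p := by
    rcases le_total 2 (2 * π * t) with h | h
    · rw [max_eq_right h]; linarith [rpow_nonneg (zero_le_two (α := ℝ)) p]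
    · rw [max_eq_left h]; linarith [rpow_nonneg h2πt p]
  calc (1 + t) ^ p ≤ max 2 (2 * π * t) ^ p := by gcongr
    _ ≤ 2 ^ p + (2 * π * t) ^ p := hmax
    _ ≤ (1 + 2 ^ p / ω) * ((2 * π * t) ^ p + ω) := by
      have : 0 ≤ 2 ^ p / ω * (2 * π * t) ^ p := by positivity
      rw [add_mul, one_mul, mul_add, div_mul_cancel₀ _ hω.ne']
      linarith

section Integrability

variable {E : Type*} [NormedAddCommGroup E] [NormedSpace ℝ E] [FiniteDimensional ℝ E]
  [MeasurableSpace E] [BorelSpace E] {μ : Measure E} [μ.IsAddHaarMeasure] {p ω : ℝ}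

theorem integrable_inv_two_pi_mul_norm_rpow_add (hp : (Module.finrank ℝ E : ℝ) < p)
    (hω : 0 < ω) : Integrable (fun ξ : E => ((2 * π * ‖ξ‖) ^ p + ω)⁻¹) μ := by
  have hp0 : 0 ≤ p := (Nat.cast_nonneg _).trans hp.le
  refine ((integrable_one_add_norm hp).const_mul (1 + 2 ^ p / ω)).mono' ?_ ?_
  · exact Measurable.aestronglyMeasurable (by fun_prop)
  · refine Filter.Eventually.of_forall fun ξ => ?_
    have hξ : 0 ≤ ‖ξ‖ := norm_nonneg ξ
    rw [norm_inv, Real.norm_of_nonneg (by positivity), rpow_neg (by positivity),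
      ← div_eq_mul_inv, le_div_iff₀ (by positivity), inv_mul_le_iff₀ (by positivity)]
    exact (one_add_rpow_le_mul_two_pi_mul_rpow_add hp0 hω hξ).trans_eq (mul_comm _ _)

theorem integral_inv_two_pi_mul_norm_rpow_add_pos (hp : (Module.finrank ℝ E : ℝ) < p)
    (hω : 0 < ω) : 0 < ∫ ξ : E, ((2 * π * ‖ξ‖) ^ p + ω)⁻¹ ∂μ := by
  have hpos : ∀ ξ : E, 0 < ((2 * π * ‖ξ‖) ^ p + ω)⁻¹ := fun ξ => by positivity
  rw [integral_pos_iff_support_of_nonneg (fun ξ => (hpos ξ).le)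
    (integrable_inv_two_pi_mul_norm_rpow_add hp hω),
    Function.support_eq_univ fun ξ => (hpos ξ).ne']
  exact isOpen_univ.measure_pos μ Set.univ_nonempty

end Integrability

section Fourier

variable {V F : Type*} [NormedAddCommGroup V] [InnerProductSpace ℝ V] [FiniteDimensional ℝ V]
  [MeasurableSpace V] [BorelSpace V] [NormedAddCommGroup F] [NormedSpace ℂ F]

theorem Real.fourierInv_apply_zero (f : V → F) : 𝓕⁻ f 0 = ∫ v, f v := by
  simp [fourierInv_eq]

theorem SchwartzMap.integral_fourier [CompleteSpace F] (ψ : SchwartzMap V F) :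
    ∫ ξ, 𝓕 (⇑ψ) ξ = ψ 0 := by
  rw [← Real.fourierInv_apply_zero, ← SchwartzMap.fourier_coe, ← SchwartzMap.fourierInv_coe,
    FourierTransform.fourierInv_fourier_eq]

end Fourier

theorem Real.rpow_neg_inv_rpow_mul_self {c a : ℝ} (hc : 0 < c) (ha : a ≠ 0) :
    (c ^ (-(1 / a))) ^ a * c ^ (-(1 / a)) = c ^ (-(1 + 1 / a)) := by
  rw [← rpow_mul hc.le, ← rpow_add hc]
  congr 1
  field_simp
  ring

theorem stmt15_general (n : ℕ) (s ω σ : ℝ) (hs : (n : ℝ) / 2 < s) (hω : 0 < ω)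
    (hσ : 0 < σ) (c : ℝ)
    (hc : c = ∫ η : EuclideanSpace ℝ (Fin n), ((2 * π * ‖η‖) ^ (2 * s) + ω)⁻¹)
    (Fhat : EuclideanSpace ℝ (Fin n) → ℂ)
    (hFhat : Fhat = fun ξ =>
      ((c ^ (-(1 + 1 / (2 * σ))) * ((2 * π * ‖ξ‖) ^ (2 * s) + ω)⁻¹ : ℝ) : ℂ))
    (φ : EuclideanSpace ℝ (Fin n) → ℂ) (hφ : φ = FourierTransformInv.fourierInv Fhat) :
    (∀ ψ : SchwartzMap (EuclideanSpace ℝ (Fin n)) ℂ,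
        ∫ ξ, ((((2 * π * ‖ξ‖) ^ (2 * s) + ω : ℝ)) : ℂ) * Fhat ξ
            * conj (FourierTransform.fourier (⇑ψ) ξ)
          = ((‖φ 0‖ ^ (2 * σ) : ℝ) : ℂ) * φ 0 * conj (ψ 0))
      ∧ φ 0 = ((c ^ (-(1 / (2 * σ))) : ℝ) : ℂ) := by
  have hdim : (Module.finrank ℝ (EuclideanSpace ℝ (Fin n)) : ℝ) < 2 * s := by
    rw [finrank_euclideanSpace_fin]; linarith
  have hc_pos : 0 < c := hc ▸ integral_inv_two_pi_mul_norm_rpow_add_pos hdim hω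
  have hφ0 : φ 0 = ((c ^ (-(1 / (2 * σ))) : ℝ) : ℂ) := by
    simp only [hφ, hFhat, Real.fourierInv_apply_zero]
    rw [integral_complex_ofReal, integral_const_mul, ← hc,
      ← rpow_add_one hc_pos.ne']
    congr 2
    ring
  have hnorm_φ0 : ‖φ 0‖ = c ^ (-(1 / (2 * σ))) := by
    rw [hφ0, Complex.norm_real, Real.norm_of_nonneg (by positivity)]
  have hsymbol : ∀ ξ : EuclideanSpace ℝ (Fin n),
      ((((2 * π * ‖ξ‖) ^ (2 * s) + ω : ℝ)) : ℂ) * Fhat ξ = ((c ^ (-(1 + 1 / (2 * σ))) : ℝ) : ℂ) := by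
    intro ξ
    have : 0 < (2 * π * ‖ξ‖) ^ (2 * s) + ω := by positivity
    rw [hFhat, ← Complex.ofReal_mul]
    field_simp
  refine ⟨fun ψ => ?_, hφ0⟩
  simp_rw [hsymbol, integral_const_mul, integral_conj, SchwartzMap.integral_fourier, hnorm_φ0,
    hφ0, ← Complex.ofReal_mul, rpow_neg_inv_rpow_mul_self hc_pos (by positivity : 2 * σ ≠ 0)]

/-- The explicit standing wave profile: the function `φ` with Fourier transform
`φ̂(ξ) = (∫ ((2π|η|)^{2s}+ω)⁻¹ dη)^{-(1+1/(2σ))}/((2π|ξ|)^{2s}+ω)` satisfies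
`(-Δ)^s φ + ω φ = |φ(0)|^{2σ}φ(0) δ₀` in the distributional sense, and
`φ(0) = (∫ ((2π|η|)^{2s}+ω)⁻¹ dη)^{-1/(2σ)}`. -/
theorem stmt15 (n : ℕ) (hn : 1 ≤ n) (s ω σ : ℝ) (hs : (n : ℝ) / 2 < s) (hω : 0 < ω)
    (hσ : 0 < σ) (c : ℝ)
    (hc : c = ∫ η : EuclideanSpace ℝ (Fin n), ((2 * π * ‖η‖) ^ (2 * s) + ω)⁻¹)
    (Fhat : EuclideanSpace ℝ (Fin n) → ℂ)
    (hFhat : Fhat = fun ξ =>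
      ((c ^ (-(1 + 1 / (2 * σ))) * ((2 * π * ‖ξ‖) ^ (2 * s) + ω)⁻¹ : ℝ) : ℂ))
    (φ : EuclideanSpace ℝ (Fin n) → ℂ) (hφ : φ = FourierTransformInv.fourierInv Fhat) :
    (∀ ψ : SchwartzMap (EuclideanSpace ℝ (Fin n)) ℂ,
        ∫ ξ, ((((2 * π * ‖ξ‖) ^ (2 * s) + ω : ℝ)) : ℂ) * Fhat ξ
            * conj (FourierTransform.fourier (⇑ψ) ξ)
          = ((‖φ 0‖ ^ (2 * σ) : ℝ) : ℂ) * φ 0 * conj (ψ 0))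
      ∧ φ 0 = ((c ^ (-(1 / (2 * σ))) : ℝ) : ℂ) :=
  stmt15_general n s ω σ hs hω hσ c hc Fhat hFhat φ hφ
end

section
/- Let n ≥ 1, s > n/2, ω > 0, and c²(ω) = (∫_{ℝⁿ}((2π|ξ|)^{2s}+ω)^{-1}dξ)^{-1}. For every ψ ∈ H^s(ℝⁿ) the quadratic form Q(ψ) = ‖(-Δ)^{s/2}ψ‖_{L²}² + ω‖ψ‖_{L²}² - c²(ω)|ψ(0)|² is nonnegative, and Q(ψ) = 0 for ψ = G_s^ω with Ĝ_s^ω(ξ) = ((2π|ξ|)^{2s}+ω)^{-1}. -/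
/-!
On the Fourier side `ψ(0) = ∫ F` and the form is `∫ w |F|²` with `w ξ = (2π|ξ|)^{2s} + ω`.
Writing `|F| = w^{-1/2} · (w^{1/2} |F|)`, Cauchy–Schwarz gives `|∫ F|² ≤ (∫ w⁻¹) ∫ w |F|²`,
which is the inequality since `c²(ω) = (∫ w⁻¹)⁻¹`; it is saturated by `F = w⁻¹`, the
Fourier transform of the Green's function.
-/

open Real MeasureTheory

section WeightedCauchySchwarz

variable {α : Type*} [MeasurableSpace α] {μ : Measure α}

theorem sq_integral_mul_le_integral_sq_mul_integral_sq {f g : α → ℝ}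
    (hf₀ : 0 ≤ᵐ[μ] f) (hg₀ : 0 ≤ᵐ[μ] g) (hf : MemLp f 2 μ) (hg : MemLp g 2 μ) :
    (∫ x, f x * g x ∂μ) ^ 2 ≤ (∫ x, f x ^ 2 ∂μ) * ∫ x, g x ^ 2 ∂μ := by
  have holder := integral_mul_le_Lp_mul_Lq_of_nonneg Real.HolderConjugate.two_two hf₀ hg₀
    (by simpa using hf) (by simpa using hg)
  simp only [rpow_two, ← sqrt_eq_rpow] at holder
  have hfg : 0 ≤ ∫ x, f x * g x ∂μ := integral_nonneg_of_ae <| by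
    filter_upwards [hf₀, hg₀] with x hfx hgx using mul_nonneg hfx hgx
  calc (∫ x, f x * g x ∂μ) ^ 2
      ≤ (√(∫ x, f x ^ 2 ∂μ) * √(∫ x, g x ^ 2 ∂μ)) ^ 2 := pow_le_pow_left₀ hfg holder 2
    _ = (∫ x, f x ^ 2 ∂μ) * ∫ x, g x ^ 2 ∂μ := by
      rw [mul_pow, sq_sqrt (integral_nonneg fun x => sq_nonneg _),
        sq_sqrt (integral_nonneg fun x => sq_nonneg _)]

variable {E : Type*} [NormedAddCommGroup E] {w : α → ℝ} {F : α → E}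

theorem sq_integral_norm_le_integral_inv_mul_integral_mul_sq (hw : ∀ x, 0 < w x)
    (hwm : AEMeasurable w μ) (hF : AEStronglyMeasurable F μ)
    (hinv : Integrable (fun x => (w x)⁻¹) μ) (hwF : Integrable (fun x => w x * ‖F x‖ ^ 2) μ) :
    (∫ x, ‖F x‖ ∂μ) ^ 2 ≤ (∫ x, (w x)⁻¹ ∂μ) * ∫ x, w x * ‖F x‖ ^ 2 ∂μ := by
  have hf_sq (x : α) : √(w x)⁻¹ ^ 2 = (w x)⁻¹ := sq_sqrt (inv_pos.2 (hw x)).le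
  have hg_sq (x : α) : (√(w x) * ‖F x‖) ^ 2 = w x * ‖F x‖ ^ 2 := by
    rw [mul_pow, sq_sqrt (hw x).le]
  have hfg (x : α) : √(w x)⁻¹ * (√(w x) * ‖F x‖) = ‖F x‖ := by
    rw [← mul_assoc, ← sqrt_mul (inv_pos.2 (hw x)).le, inv_mul_cancel₀ (hw x).ne', sqrt_one,
      one_mul]
  have hf : MemLp (fun x => √(w x)⁻¹) 2 μ :=
    (memLp_two_iff_integrable_sq (by fun_prop)).2 (by simpa only [hf_sq] using hinv)
  have hg : MemLp (fun x => √(w x) * ‖F x‖) 2 μ :=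
    (memLp_two_iff_integrable_sq (by fun_prop)).2 (by simpa only [hg_sq] using hwF)
  have cs := sq_integral_mul_le_integral_sq_mul_integral_sq
    (Filter.Eventually.of_forall fun x => sqrt_nonneg _)
    (Filter.Eventually.of_forall fun x => mul_nonneg (sqrt_nonneg _) (norm_nonneg _)) hf hg
  simpa only [hfg, hf_sq, hg_sq] using cs

theorem inv_integral_inv_mul_sq_norm_integral_le [NormedSpace ℝ E] (hw : ∀ x, 0 < w x)
    (hwm : AEMeasurable w μ) (hF : AEStronglyMeasurable F μ)
    (hwF : Integrable (fun x => w x * ‖F x‖ ^ 2) μ) :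
    (∫ x, (w x)⁻¹ ∂μ)⁻¹ * ‖∫ x, F x ∂μ‖ ^ 2 ≤ ∫ x, w x * ‖F x‖ ^ 2 ∂μ := by
  set I := ∫ x, (w x)⁻¹ ∂μ
  have hB : 0 ≤ ∫ x, w x * ‖F x‖ ^ 2 ∂μ :=
    integral_nonneg fun x => mul_nonneg (hw x).le (sq_nonneg _)
  -- `I = 0` includes the junk value of a non-integrable `w⁻¹`.
  rcases eq_or_ne I 0 with hI | hI
  · simpa [hI] using hB
  have hI_pos : 0 < I :=
    (integral_nonneg fun x => (inv_pos.2 (hw x)).le).lt_of_ne' hI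
  calc I⁻¹ * ‖∫ x, F x ∂μ‖ ^ 2
      ≤ I⁻¹ * (∫ x, ‖F x‖ ∂μ) ^ 2 := by
        gcongr
        exact norm_integral_le_integral_norm F
    _ ≤ I⁻¹ * (I * ∫ x, w x * ‖F x‖ ^ 2 ∂μ) := by
        gcongr
        exact sq_integral_norm_le_integral_inv_mul_integral_mul_sq hw hwm hF
          (Integrable.of_integral_ne_zero hI) hwF
    _ = ∫ x, w x * ‖F x‖ ^ 2 ∂μ := inv_mul_cancel_left₀ hI _

theorem integral_mul_inv_sq_eq (hw : ∀ x, w x ≠ 0) :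
    ∫ x, w x * (w x)⁻¹ ^ 2 ∂μ = (∫ x, (w x)⁻¹ ∂μ)⁻¹ * (∫ x, (w x)⁻¹ ∂μ) ^ 2 := by
  have hpt (x : α) : w x * (w x)⁻¹ ^ 2 = (w x)⁻¹ := by
    rw [sq, mul_inv_cancel_left₀ (hw x)]
  simp_rw [hpt]
  rw [sq, ← mul_assoc, inv_mul_mul_self]

end WeightedCauchySchwarz

theorem stmt18_general (n : ℕ) (s ω : ℝ) (hω : 0 < ω)
    (c2 : ℝ)
    (hc2 : c2 = (∫ ξ : EuclideanSpace ℝ (Fin n), ((2 * π * ‖ξ‖) ^ (2 * s) + ω)⁻¹)⁻¹) :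
    (∀ F : EuclideanSpace ℝ (Fin n) → ℂ, Integrable F →
        Integrable (fun ξ => ((2 * π * ‖ξ‖) ^ (2 * s) + ω) * ‖F ξ‖ ^ 2) →
        c2 * ‖∫ ξ, F ξ‖ ^ 2
          ≤ ∫ ξ, ((2 * π * ‖ξ‖) ^ (2 * s) + ω) * ‖F ξ‖ ^ 2)
      ∧ (∫ ξ : EuclideanSpace ℝ (Fin n),
            ((2 * π * ‖ξ‖) ^ (2 * s) + ω) * (((2 * π * ‖ξ‖) ^ (2 * s) + ω)⁻¹) ^ 2)
          = c2 * (∫ ξ : EuclideanSpace ℝ (Fin n), ((2 * π * ‖ξ‖) ^ (2 * s) + ω)⁻¹) ^ 2 := by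
  have hw_pos (ξ : EuclideanSpace ℝ (Fin n)) : 0 < (2 * π * ‖ξ‖) ^ (2 * s) + ω := by
    have := rpow_nonneg (by positivity : 0 ≤ 2 * π * ‖ξ‖) (2 * s)
    linarith
  have hw_meas : Measurable
      fun ξ : EuclideanSpace ℝ (Fin n) => (2 * π * ‖ξ‖) ^ (2 * s) + ω := by
    fun_prop
  subst hc2
  exact ⟨fun F hF hwF =>
    inv_integral_inv_mul_sq_norm_integral_le hw_pos hw_meas.aemeasurable hF.1 hwF,
    integral_mul_inv_sq_eq fun ξ => (hw_pos ξ).ne'⟩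

/-- Nonnegativity of the quadratic form of `L₋ = (-Δ)^s + ω - c²(ω)δ₀` on `H^s`, expressed
on the Fourier side (with `ψ = 𝓕⁻¹F`, so `ψ(0) = ∫F` and
`‖(-Δ)^{s/2}ψ‖² + ω‖ψ‖² = ∫((2π|ξ|)^{2s}+ω)|F|²`), together with the equality case for the
Green's function `G_s^ω` with `Ĝ(ξ) = ((2π|ξ|)^{2s}+ω)⁻¹`. -/
theorem stmt18 (n : ℕ) (hn : 1 ≤ n) (s ω : ℝ) (hs : (n : ℝ) / 2 < s) (hω : 0 < ω)
    (c2 : ℝ)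
    (hc2 : c2 = (∫ ξ : EuclideanSpace ℝ (Fin n), ((2 * π * ‖ξ‖) ^ (2 * s) + ω)⁻¹)⁻¹) :
    (∀ F : EuclideanSpace ℝ (Fin n) → ℂ, Integrable F →
        Integrable (fun ξ => ((2 * π * ‖ξ‖) ^ (2 * s) + ω) * ‖F ξ‖ ^ 2) →
        c2 * ‖∫ ξ, F ξ‖ ^ 2
          ≤ ∫ ξ, ((2 * π * ‖ξ‖) ^ (2 * s) + ω) * ‖F ξ‖ ^ 2)
      ∧ (∫ ξ : EuclideanSpace ℝ (Fin n),
            ((2 * π * ‖ξ‖) ^ (2 * s) + ω) * (((2 * π * ‖ξ‖) ^ (2 * s) + ω)⁻¹) ^ 2)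
          = c2 * (∫ ξ : EuclideanSpace ℝ (Fin n), ((2 * π * ‖ξ‖) ^ (2 * s) + ω)⁻¹) ^ 2 :=
  stmt18_general n s ω hω c2 hc2
end
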